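/- The function Π(w) := ∫₀¹ (z − z²) log(1 − (z − z²) w) dz, defined for real w < 4, extends to a holomorphic function of w on ℂ \ [4, ∞); consequently k ↦ Π(k²/m²) is holomorphic on {k ∈ ℂ⁴ : k² ∉ ℝ or k² < 4m²}. -/

import Mathlib

/-! Since `0 ≤ z − z² ≤ 1/4` on `[0, 1]`, the argument `1 − (z − z²) w` of the logarithm stays in
the slit plane for `w ∉ [4, ∞)`. There the `w`-derivative `−(z − z²)² / (1 − (z − z²) w)` of the
integrand is jointly continuous, hence bounded on (compact ball) × `[0, 1]`, and differentiation
under the integral sign gives holomorphy. For real `m ≠ 0` the entire map `k ↦ k² / m²` sends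
`{k² ∉ ℝ or k² < 4m²}` into `ℂ \ [4, ∞)`, which gives the statement about `k`. -/

open intervalIntegral

/-- The complexified Minkowski square `k² = (k⁰)² − (k¹)² − (k²)² − (k³)²`. -/
def minkSq (k : Fin 4 → ℂ) : ℂ := (k 0) ^ 2 - (k 1) ^ 2 - (k 2) ^ 2 - (k 3) ^ 2

open MeasureTheory Set Metric
open scoped Interval

theorem intervalIntegral.hasDerivAt_integral_of_continuousOn
    {𝕜 E : Type*} [RCLike 𝕜] [NormedAddCommGroup E] [NormedSpace ℝ E] [NormedSpace 𝕜 E]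
    {μ : Measure ℝ} [IsLocallyFiniteMeasure μ] {F F' : 𝕜 → ℝ → E} {U : Set 𝕜} {a b : ℝ}
    {w₀ : 𝕜} (hU : IsOpen U) (hw₀ : w₀ ∈ U)
    (hF : ∀ w ∈ U, ContinuousOn (F w) [[a, b]])
    (hF' : ContinuousOn (Function.uncurry F') (U ×ˢ [[a, b]]))
    (hderiv : ∀ w ∈ U, ∀ t ∈ [[a, b]], HasDerivAt (F · t) (F' w t) w) :
    HasDerivAt (fun w => ∫ t in a..b, F w t ∂μ) (∫ t in a..b, F' w₀ t ∂μ) w₀ := by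
  obtain ⟨ε, hε, hball⟩ := nhds_basis_closedBall.mem_iff.mp (hU.mem_nhds hw₀)
  obtain ⟨C, hC⟩ := (isCompact_closedBall w₀ ε |>.prod isCompact_uIcc).exists_bound_of_continuousOn
    (hF'.mono (prod_mono hball subset_rfl))
  have hΙ : Ι a b ⊆ [[a, b]] := uIoc_subset_uIcc
  refine (hasDerivAt_integral_of_dominated_loc_of_deriv_le (bound := fun _ => C)
    (ball_mem_nhds w₀ hε) ?_ (hF w₀ hw₀).intervalIntegrable ?_ ?_ intervalIntegrable_const ?_).2
  · filter_upwards [hU.mem_nhds hw₀] with w hw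
    exact ((hF w hw).mono hΙ).aestronglyMeasurable measurableSet_uIoc
  · have hF'₀ : ContinuousOn (F' w₀) [[a, b]] :=
      hF'.comp (Continuous.prodMk_right w₀).continuousOn fun _ ht => mk_mem_prod hw₀ ht
    exact (hF'₀.mono hΙ).aestronglyMeasurable measurableSet_uIoc
  · exact ae_of_all _ fun t ht w hw => hC (w, t) ⟨ball_subset_closedBall hw, hΙ ht⟩
  · exact ae_of_all _ fun t ht w hw => hderiv w (hball (ball_subset_closedBall hw)) t (hΙ ht)

lemma Complex.one_sub_ofReal_mul_mem_slitPlane {t : ℝ} {w : ℂ} (ht : 0 ≤ t)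
    (hw : w.im ≠ 0 ∨ t * w.re < 1) : 1 - t * w ∈ Complex.slitPlane := by
  rw [Complex.mem_slitPlane_iff]
  simp only [Complex.sub_re, Complex.one_re, Complex.re_ofReal_mul, Complex.sub_im,
    Complex.one_im, Complex.im_ofReal_mul, zero_sub, ne_eq, neg_eq_zero, mul_eq_zero, not_or]
  rcases ht.eq_or_lt with rfl | ht
  · norm_num
  · rcases hw with hw | hw
    · exact .inr ⟨ht.ne', hw⟩
    · exact .inl (by linarith)

def cutPlane : Set ℂ := {w : ℂ | ¬ (w.im = 0 ∧ 4 ≤ w.re)}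

lemma isOpen_cutPlane : IsOpen cutPlane := by
  have : cutPlane = {w : ℂ | w.im ≠ 0} ∪ {w : ℂ | w.re < 4} := by
    ext w
    simp only [cutPlane, mem_ofPred_eq, mem_union, not_and_or, not_le]
  rw [this]
  exact (isOpen_ne_fun Complex.continuous_im continuous_const).union
    (isOpen_lt Complex.continuous_re continuous_const)

lemma one_sub_sub_sq_mul_mem_slitPlane {z : ℝ} (hz : z ∈ [[0, 1]]) {w : ℂ} (hw : w ∈ cutPlane) :
    1 - ((z : ℂ) - (z : ℂ) ^ 2) * w ∈ Complex.slitPlane := by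
  rw [uIcc_of_le zero_le_one] at hz
  obtain ⟨h0, h1⟩ := hz
  have hcast : (z : ℂ) - (z : ℂ) ^ 2 = ((z - z ^ 2 : ℝ) : ℂ) := by push_cast; ring
  have hnonneg : 0 ≤ z - z ^ 2 := by nlinarith
  have hquarter : z - z ^ 2 ≤ 1 / 4 := by nlinarith [sq_nonneg (z - 1 / 2)]
  rw [hcast]
  refine Complex.one_sub_ofReal_mul_mem_slitPlane hnonneg ?_
  simp only [cutPlane, mem_ofPred_eq, not_and_or, not_le] at hw
  refine hw.imp_right fun hre4 => ?_
  rcases le_or_gt w.re 0 with hre | hre <;> nlinarith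

lemma div_sq_mem_cutPlane {m : ℝ} (hm : m ≠ 0) {w : ℂ}
    (hw : w.im ≠ 0 ∨ (w.im = 0 ∧ w.re < 4 * m ^ 2)) : w / (m : ℂ) ^ 2 ∈ cutPlane := by
  have hm2 : 0 < m ^ 2 := by positivity
  rw [← Complex.ofReal_pow]
  simp only [cutPlane, mem_ofPred_eq, Complex.div_ofReal_re, Complex.div_ofReal_im,
    div_eq_zero_iff, hm2.ne', or_false, not_and, not_le, div_lt_iff₀ hm2]
  rcases hw with hw | ⟨-, hw⟩
  · exact fun h => absurd h hw
  · exact fun _ => by linarith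

noncomputable def vacuumPolarization (w : ℂ) : ℂ :=
  ∫ z in (0 : ℝ)..1, ((z : ℂ) - (z : ℂ) ^ 2) * Complex.log (1 - ((z : ℂ) - (z : ℂ) ^ 2) * w)

lemma differentiableOn_vacuumPolarization :
    DifferentiableOn ℂ vacuumPolarization cutPlane := by
  intro w₀ hw₀
  refine (hasDerivAt_integral_of_continuousOn (F' := fun w z =>
      ((z : ℂ) - (z : ℂ) ^ 2) * ((1 - ((z : ℂ) - (z : ℂ) ^ 2) * w)⁻¹ * -((z : ℂ) - (z : ℂ) ^ 2)))
    isOpen_cutPlane hw₀ ?_ ?_ ?_).differentiableAt.differentiableWithinAt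
  · intro w hw
    exact ContinuousOn.mul (by fun_prop)
      (ContinuousOn.clog (by fun_prop) fun z hz => one_sub_sub_sq_mul_mem_slitPlane hz hw)
  · refine ContinuousOn.mul (by fun_prop) (ContinuousOn.mul (ContinuousOn.inv₀ (by fun_prop)
      fun p hp => Complex.slitPlane_ne_zero (one_sub_sub_sq_mul_mem_slitPlane hp.2 hp.1))
      (by fun_prop))
  · intro w hw z hz
    have hlin : HasDerivAt (fun w : ℂ => 1 - ((z : ℂ) - (z : ℂ) ^ 2) * w)
        (-((z : ℂ) - (z : ℂ) ^ 2)) w := by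
      simpa only [id, mul_one] using
        ((hasDerivAt_id w).const_mul ((z : ℂ) - (z : ℂ) ^ 2)).const_sub 1
    exact ((Complex.hasDerivAt_log (one_sub_sub_sq_mul_mem_slitPlane hz hw)).comp w hlin).const_mul
      _

/-- `Π(w) = ∫₀¹ (z−z²) log(1 − (z−z²)w) dz`, defined for real `w < 4`, extends to a
holomorphic function on `ℂ \ [4,∞)`; consequently `k ↦ Π(k²/m²)` is holomorphic on
`{k ∈ ℂ⁴ : k² ∉ ℝ or k² < 4m²}`. -/
theorem Pi_holomorphic_extension (m : ℝ) (hm : 0 < m) :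
    ∃ Φ : ℂ → ℂ,
      (∀ w : ℝ, w < 4 →
        Φ (w : ℂ) = ∫ z in (0 : ℝ)..1,
          ((z : ℂ) - (z : ℂ) ^ 2) * Complex.log (1 - ((z : ℂ) - (z : ℂ) ^ 2) * (w : ℂ))) ∧
      DifferentiableOn ℂ Φ {w : ℂ | ¬ (w.im = 0 ∧ 4 ≤ w.re)} ∧
      DifferentiableOn ℂ (fun k : Fin 4 → ℂ => Φ (minkSq k / (m : ℂ) ^ 2))
        {k : Fin 4 → ℂ |
          (minkSq k).im ≠ 0 ∨ ((minkSq k).im = 0 ∧ (minkSq k).re < 4 * m ^ 2)} := by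
  have hscaled : Differentiable ℂ fun k => minkSq k / (m : ℂ) ^ 2 := by
    unfold minkSq
    fun_prop
  exact ⟨vacuumPolarization, fun _ _ => rfl, differentiableOn_vacuumPolarization,
    differentiableOn_vacuumPolarization.comp hscaled.differentiableOn
      fun _ hk => div_sq_mem_cutPlane hm.ne' hk⟩
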